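/- arXiv:1308.5818 — 8 statements merged into one kernel-verified Lean document; each statement's English description precedes it below -/
import Mathlib

section
/- Let F be as in the class Ω conditions (F1)–(F4) and for large n let x₁(n) be the unique positive solution of F(x) = n·x. Then there exists α > 0, depending only on A, A₁, A₂, such that n·x₁(n) ≥ n^α for all sufficiently large n. -/
/-!
The lower bound `A₂ F(x)/x ≤ -F'(x)` makes `x ↦ F(x) x^A₂` nonincreasing, so at `x = x₁(n)`,
where `F(x) = n x`, we get `F(A) A^A₂ ≤ n x · x^A₂`. Writing `u = n x` this reads
`F(A) A^A₂ · n^A₂ ≤ u^(1+A₂)`, so `n x₁(n)` grows at least like `n^(A₂/(1+A₂))`, and any smaller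
exponent works for large `n`.
-/

open Set Filter

lemma antitoneOn_mul_rpow_of_le_neg_deriv {s : Set ℝ} (hs : Convex ℝ s) (hs0 : s ⊆ Ioi 0)
    {F F' : ℝ → ℝ} {c : ℝ} (hderiv : ∀ x ∈ s, HasDerivAt F (F' x) x)
    (hbound : ∀ x ∈ s, c * F x / x ≤ -F' x) :
    AntitoneOn (fun x => F x * x ^ c) s := by
  have hG : ∀ x ∈ s, HasDerivAt (fun x => F x * x ^ c)
      (F' x * x ^ c + F x * (c * x ^ (c - 1))) x := fun x hx =>
    (hderiv x hx).mul (Real.hasDerivAt_rpow_const (Or.inl (hs0 hx).ne'))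
  refine antitoneOn_of_hasDerivWithinAt_nonpos hs
    (fun x hx => (hG x hx).continuousAt.continuousWithinAt)
    (fun x hx => (hG x (interior_subset hx)).hasDerivWithinAt) fun x hx => ?_
  have hxs := interior_subset hx
  have hx0 : 0 < x := hs0 hxs
  have hsplit : x ^ c = x * x ^ (c - 1) := by
    rw [Real.rpow_sub_one hx0.ne', mul_div_cancel₀ _ hx0.ne']
  have h := mul_le_mul_of_nonneg_right (hbound x hxs) (Real.rpow_nonneg hx0.le c)
  rw [hsplit, div_mul_eq_mul_div, mul_div_assoc, mul_div_cancel_left₀ _ hx0.ne'] at h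
  rw [hsplit]
  linarith

lemma const_mul_rpow_le_of_le_mul_rpow {n x C p : ℝ} (hn : 0 < n) (hx : 0 < x) (hC : 0 ≤ C)
    (hp : 0 ≤ p) (h : C ≤ n * x * x ^ p) :
    C ^ (1 + p)⁻¹ * n ^ (p / (1 + p)) ≤ n * x := by
  have hp1 : 0 < 1 + p := by linarith
  have hpow : C * n ^ p ≤ (n * x) ^ (1 + p) := by
    calc C * n ^ p ≤ n * x * x ^ p * n ^ p := by gcongr
      _ = (n * x) ^ (1 + p) := by
        rw [Real.rpow_one_add' (by positivity) hp1.ne', Real.mul_rpow hn.le hx.le]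
        ring
  calc C ^ (1 + p)⁻¹ * n ^ (p / (1 + p)) = (C * n ^ p) ^ (1 + p)⁻¹ := by
        rw [Real.mul_rpow hC (by positivity), ← Real.rpow_mul hn.le, div_eq_mul_inv]
    _ ≤ n * x := (Real.rpow_inv_le_iff_of_pos (by positivity) (by positivity) hp1).2 hpow

lemma eventually_rpow_half_le_const_mul_rpow {c γ : ℝ} (hc : 0 < c) (hγ : 0 < γ) :
    ∀ᶠ n : ℝ in atTop, n ^ (γ / 2) ≤ c * n ^ γ := by
  have hγ2 : 0 < γ / 2 := half_pos hγ
  filter_upwards [((tendsto_rpow_atTop hγ2).const_mul_atTop hc).eventually_ge_atTop 1,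
    eventually_ge_atTop 0] with n hn hn0
  calc n ^ (γ / 2) = 1 * n ^ (γ / 2) := (one_mul _).symm
    _ ≤ c * n ^ (γ / 2) * n ^ (γ / 2) := by gcongr
    _ = c * n ^ γ := by rw [mul_assoc, ← Real.rpow_add' hn0 (by positivity), add_halves]

theorem stmt_2_general (A A₂ : ℝ) (hA : 0 < A) (hA₂ : 0 < A₂)
    (F F' : ℝ → ℝ)
    (hFpos : ∀ x ∈ Set.Ioc 0 A, 0 < F x)
    (hderiv : ∀ x ∈ Set.Ioc 0 A, HasDerivAt F (F' x) x)
    (hlow : ∀ x ∈ Set.Ioc 0 A, A₂ * F x / x ≤ -F' x)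
    (x₁ : ℝ → ℝ)
    (hx₁ : ∀ n : ℝ, F A / A ≤ n → x₁ n ∈ Set.Ioc 0 A ∧ F (x₁ n) = n * x₁ n) :
    ∃ α > (0:ℝ), ∃ N : ℝ, ∀ n : ℝ, N ≤ n → n ^ α ≤ n * x₁ n := by
  have hAmem : A ∈ Ioc 0 A := ⟨hA, le_rfl⟩
  set C := F A * A ^ A₂
  have hC : 0 < C := mul_pos (hFpos A hAmem) (Real.rpow_pos_of_pos hA A₂)
  have hdecr := antitoneOn_mul_rpow_of_le_neg_deriv (convex_Ioc 0 A) Ioc_subset_Ioi_self hderiv hlow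
  have hgrowth : ∀ n, F A / A ≤ n → C ^ (1 + A₂)⁻¹ * n ^ (A₂ / (1 + A₂)) ≤ n * x₁ n := by
    intro n hn
    obtain ⟨hx, hFx⟩ := hx₁ n hn
    have hCle : C ≤ n * x₁ n * x₁ n ^ A₂ := hFx ▸ hdecr hx hAmem hx.2
    exact const_mul_rpow_le_of_le_mul_rpow ((div_pos (hFpos A hAmem) hA).trans_le hn) hx.1
      hC.le hA₂.le hCle
  obtain ⟨N, hN⟩ := ((eventually_rpow_half_le_const_mul_rpow (Real.rpow_pos_of_pos hC _)
    (by positivity : 0 < A₂ / (1 + A₂))).and (eventually_ge_atTop (F A / A))).exists_forall_of_atTop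
  exact ⟨A₂ / (1 + A₂) / 2, by positivity, N, fun n hn => (hN n hn).1.trans (hgrowth n (hN n hn).2)⟩

theorem stmt_2 (A A₁ A₂ : ℝ) (hA : 0 < A) (hA₁ : 0 < A₁) (hA₂ : 0 < A₂)
    (F F' : ℝ → ℝ)
    (hFpos : ∀ x ∈ Set.Ioc 0 A, 0 < F x)
    (hanti : StrictAntiOn F (Set.Ioc 0 A))
    (htop : Filter.Tendsto F (nhdsWithin 0 (Set.Ioi 0)) Filter.atTop)
    (hderiv : ∀ x ∈ Set.Ioc 0 A, HasDerivAt F (F' x) x)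
    (hlow : ∀ x ∈ Set.Ioc 0 A, A₂ * F x / x ≤ -F' x)
    (hup : ∀ x ∈ Set.Ioc 0 A, -F' x ≤ A₁ * F x / x)
    (x₁ : ℝ → ℝ)
    (hx₁ : ∀ n : ℝ, F A / A ≤ n → x₁ n ∈ Set.Ioc 0 A ∧ F (x₁ n) = n * x₁ n) :
    ∃ α > (0:ℝ), ∃ N : ℝ, ∀ n : ℝ, N ≤ n → n ^ α ≤ n * x₁ n :=
  stmt_2_general A A₂ hA hA₂ F F' hFpos hderiv hlow x₁ hx₁
end

section
/- Let F satisfy conditions (F1)–(F4) and let x₁(n) be the unique positive solution of F(x) = n·x. Then there exists ε > 0, depending only on A, A₁, A₂, such that for all sufficiently large n: (1+ε)·x₁(2n) < x₁(n) < (2−ε)·x₁(2n). One may take ε = (1/2)·min{1/(1+2A₁), A₂/(1+A₂)}. -/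
/-!
Write `a = x₁(2n)` and `b = x₁(n)`, so that `F(a)/a = 2 F(b)/b`. The two bounds on `-F'` say that
`log F + A₁ log` is increasing and `log F + A₂ log` is decreasing; comparing them at `a ≤ b` gives
`log 2 ≤ (1 + A₁) log (b/a)` and `(1 + A₂) log (b/a) ≤ log 2`, and elementary estimates on `log`
turn these into `1 + ε < b/a < 2 - ε`.
-/

open Set Real

section LogBounds

variable {k r ε : ℝ}

lemma one_add_lt_of_log_two_le_mul_log (hr : 0 < r) (hk : 0 < k) (hε : k * ε ≤ 1 / 2)
    (h : log 2 ≤ k * log r) : 1 + ε < r := by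
  have hε_lt : ε < log r := by
    refine lt_of_mul_lt_mul_left ?_ hk.le
    linarith [log_two_gt_d9]
  calc 1 + ε ≤ exp ε := by linarith [add_one_le_exp ε]
    _ < exp (log r) := exp_lt_exp.2 hε_lt
    _ = r := exp_log hr

lemma lt_two_sub_of_mul_log_le_log_two (hr : 0 < r) (hk : 0 < k) (hε₀ : 0 ≤ ε)
    (hε : k * ε < k - 1) (h : k * log r ≤ log 2) : r < 2 - ε := by
  have hy : 0 < 2 - ε := by nlinarith
  set t := (2 - ε)⁻¹
  have hty : t * (2 - ε) = 1 := inv_mul_cancel₀ hy.ne'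
  -- with `y = 2 - ε`, the bounds `log (2 / y) ≤ 2 / y - 1` and `1 - 1 / y ≤ log y` reduce
  -- `log 2 < k log y` to `k ε < k - 1`
  have hquot : log 2 - log (2 - ε) ≤ 2 * t - 1 := by
    rw [← log_div two_ne_zero hy.ne', div_eq_mul_inv]
    exact log_le_sub_one_of_pos (by positivity)
  have hlog : 1 - t ≤ log (2 - ε) := one_sub_inv_le_log_of_pos hy
  have hk₁ : 0 ≤ k - 1 := by nlinarith
  have hstep : 2 * t - 1 < (k - 1) * (1 - t) := by
    have : (2 * t - 1 - (k - 1) * (1 - t)) * (2 - ε) = k * ε - (k - 1) := by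
      linear_combination (1 + k) * hty
    nlinarith
  have hlog2 : log 2 < k * log (2 - ε) := by
    nlinarith [mul_le_mul_of_nonneg_left hlog hk₁]
  exact (log_lt_log_iff hr hy).1 (lt_of_mul_lt_mul_left (h.trans_lt hlog2) hk.le)

end LogBounds

section Ratio

variable {F F' : ℝ → ℝ} {s : Set ℝ} {a b c m : ℝ}

lemma hasDerivAt_log_add_mul_log {x : ℝ} (hF : HasDerivAt F (F' x) x) (hFx : F x ≠ 0)
    (hx : x ≠ 0) :
    HasDerivAt (fun y => log (F y) + c * log y) ((c * F x / x - -F' x) / F x) x := by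
  refine ((hF.log hFx).add ((hasDerivAt_log hx).const_mul c)).congr_deriv ?_
  field_simp
  ring

lemma monotoneOn_log_add_mul_log (hs : Convex ℝ s) (hs₀ : ∀ x ∈ s, 0 < x)
    (hF : ∀ x ∈ s, 0 < F x) (hderiv : ∀ x ∈ s, HasDerivAt F (F' x) x)
    (hup : ∀ x ∈ s, -F' x ≤ c * F x / x) :
    MonotoneOn (fun x => log (F x) + c * log x) s := by
  have hg : ∀ x ∈ s, HasDerivAt (fun y => log (F y) + c * log y)
      ((c * F x / x - -F' x) / F x) x := fun x hx =>
    hasDerivAt_log_add_mul_log (hderiv x hx) (hF x hx).ne' (hs₀ x hx).ne'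
  refine monotoneOn_of_deriv_nonneg hs (fun x hx => (hg x hx).continuousAt.continuousWithinAt)
    (fun x hx => (hg x (interior_subset hx)).differentiableAt.differentiableWithinAt)
    fun x hx => ?_
  rw [(hg x (interior_subset hx)).deriv]
  exact div_nonneg (sub_nonneg.2 (hup x (interior_subset hx))) (hF x (interior_subset hx)).le

lemma antitoneOn_log_add_mul_log (hs : Convex ℝ s) (hs₀ : ∀ x ∈ s, 0 < x)
    (hF : ∀ x ∈ s, 0 < F x) (hderiv : ∀ x ∈ s, HasDerivAt F (F' x) x)
    (hlow : ∀ x ∈ s, c * F x / x ≤ -F' x) :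
    AntitoneOn (fun x => log (F x) + c * log x) s := by
  have hg : ∀ x ∈ s, HasDerivAt (fun y => log (F y) + c * log y)
      ((c * F x / x - -F' x) / F x) x := fun x hx =>
    hasDerivAt_log_add_mul_log (hderiv x hx) (hF x hx).ne' (hs₀ x hx).ne'
  refine antitoneOn_of_deriv_nonpos hs (fun x hx => (hg x hx).continuousAt.continuousWithinAt)
    (fun x hx => (hg x (interior_subset hx)).differentiableAt.differentiableWithinAt)
    fun x hx => ?_
  rw [(hg x (interior_subset hx)).deriv]
  exact div_nonpos_of_nonpos_of_nonneg (sub_nonpos.2 (hlow x (interior_subset hx)))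
    (hF x (interior_subset hx)).le

lemma le_of_antitoneOn_of_eq_two_mul (hanti : AntitoneOn F s) (ha : a ∈ s) (hb : b ∈ s)
    (ha₀ : 0 < a) (hm : 0 < m) (hFa : F a = 2 * m * a) (hFb : F b = m * b) : a ≤ b := by
  by_contra! hba
  have := hanti hb ha hba.le
  rw [hFa, hFb] at this
  nlinarith [mul_pos hm ha₀]

lemma log_add_mul_log_sub_eq (ha : 0 < a) (hb : 0 < b) (hm : 0 < m)
    (hFa : F a = 2 * m * a) (hFb : F b = m * b) :
    (log (F b) + c * log b) - (log (F a) + c * log a) = (1 + c) * log (b / a) - log 2 := by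
  rw [hFa, hFb, log_mul (by positivity) ha.ne', log_mul two_ne_zero hm.ne',
    log_mul hm.ne' hb.ne', log_div hb.ne' ha.ne']
  ring

end Ratio

theorem stmt_3_general (A A₁ A₂ : ℝ) (hA₁ : 0 < A₁) (hA₂ : 0 < A₂)
    (F F' : ℝ → ℝ)
    (hFpos : ∀ x ∈ Set.Ioc 0 A, 0 < F x)
    (hanti : StrictAntiOn F (Set.Ioc 0 A))
    (hderiv : ∀ x ∈ Set.Ioc 0 A, HasDerivAt F (F' x) x)
    (hlow : ∀ x ∈ Set.Ioc 0 A, A₂ * F x / x ≤ -F' x)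
    (hup : ∀ x ∈ Set.Ioc 0 A, -F' x ≤ A₁ * F x / x)
    (x₁ : ℝ → ℝ)
    (hx₁ : ∀ n : ℝ, F A / A ≤ n → x₁ n ∈ Set.Ioc 0 A ∧ F (x₁ n) = n * x₁ n) :
    ∃ ε > (0:ℝ),
      ε = (1/2) * min (1 / (1 + 2 * A₁)) (A₂ / (1 + A₂)) ∧
      ∃ N : ℝ, ∀ n : ℝ, N ≤ n →
        (1 + ε) * x₁ (2 * n) < x₁ n ∧ x₁ n < (2 - ε) * x₁ (2 * n) := by
  set ε := (1/2) * min (1 / (1 + 2 * A₁)) (A₂ / (1 + A₂))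
  have hε₀ : 0 < ε := by positivity
  have hε₁ : (1 + A₁) * ε ≤ 1 / 2 :=
    calc (1 + A₁) * ε ≤ (1 + 2 * A₁) * ((1 / 2) * (1 / (1 + 2 * A₁))) := by
          gcongr
          · linarith
          · exact mul_le_mul_of_nonneg_left (min_le_left _ _) (by norm_num)
      _ = 1 / 2 := by field_simp
  have hε₂ : (1 + A₂) * ε < (1 + A₂) - 1 :=
    calc (1 + A₂) * ε ≤ (1 + A₂) * ((1 / 2) * (A₂ / (1 + A₂))) := by
          gcongr
          exact mul_le_mul_of_nonneg_left (min_le_right _ _) (by norm_num)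
      _ = A₂ / 2 := by field_simp
      _ < (1 + A₂) - 1 := by linarith
  refine ⟨ε, hε₀, rfl, F A / A, fun n hn => ?_⟩
  obtain ⟨hb, hFb⟩ := hx₁ n hn
  have hn₀ : 0 < n := pos_of_mul_pos_left (hFb ▸ hFpos _ hb) hb.1.le
  obtain ⟨ha, hFa⟩ := hx₁ (2 * n) (by linarith)
  have hab := le_of_antitoneOn_of_eq_two_mul hanti.antitoneOn ha hb ha.1 hn₀ hFa hFb
  have hs₀ : ∀ x ∈ Ioc 0 A, 0 < x := fun x hx => hx.1
  have hincr := monotoneOn_log_add_mul_log (convex_Ioc 0 A) hs₀ hFpos hderiv hup ha hb hab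
  have hdecr := antitoneOn_log_add_mul_log (convex_Ioc 0 A) hs₀ hFpos hderiv hlow ha hb hab
  have hA₁eq := log_add_mul_log_sub_eq (c := A₁) ha.1 hb.1 hn₀ hFa hFb
  have hA₂eq := log_add_mul_log_sub_eq (c := A₂) ha.1 hb.1 hn₀ hFa hFb
  have hr : 0 < x₁ n / x₁ (2 * n) := div_pos hb.1 ha.1
  constructor
  · exact (lt_div_iff₀ ha.1).1 <|
      one_add_lt_of_log_two_le_mul_log hr (by positivity) hε₁ (by simp only at hincr; linarith)
  · exact (div_lt_iff₀ ha.1).1 <| lt_two_sub_of_mul_log_le_log_two hr (by positivity) hε₀.le hε₂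
      (by simp only at hdecr; linarith)

theorem stmt_3 (A A₁ A₂ : ℝ) (hA : 0 < A) (hA₁ : 0 < A₁) (hA₂ : 0 < A₂)
    (F F' : ℝ → ℝ)
    (hFpos : ∀ x ∈ Set.Ioc 0 A, 0 < F x)
    (hanti : StrictAntiOn F (Set.Ioc 0 A))
    (htop : Filter.Tendsto F (nhdsWithin 0 (Set.Ioi 0)) Filter.atTop)
    (hderiv : ∀ x ∈ Set.Ioc 0 A, HasDerivAt F (F' x) x)
    (hlow : ∀ x ∈ Set.Ioc 0 A, A₂ * F x / x ≤ -F' x)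
    (hup : ∀ x ∈ Set.Ioc 0 A, -F' x ≤ A₁ * F x / x)
    (x₁ : ℝ → ℝ)
    (hx₁ : ∀ n : ℝ, F A / A ≤ n → x₁ n ∈ Set.Ioc 0 A ∧ F (x₁ n) = n * x₁ n) :
    ∃ ε > (0:ℝ),
      ε = (1/2) * min (1 / (1 + 2 * A₁)) (A₂ / (1 + A₂)) ∧
      ∃ N : ℝ, ∀ n : ℝ, N ≤ n →
        (1 + ε) * x₁ (2 * n) < x₁ n ∧ x₁ n < (2 - ε) * x₁ (2 * n) :=
  stmt_3_general A A₁ A₂ hA₁ hA₂ F F' hFpos hanti hderiv hlow hup x₁ hx₁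
end

section
/- For each positive integer k, the sum of k!/(m₁!·m₂!·⋯·m_k!·(k − m₁ − ⋯ − m_k)!) over all tuples of nonnegative integers (m₁,…,m_k) with m₁ + 2m₂ + ⋯ + k·m_k = k equals (1/2)·C(2k, k), i.e. half the central binomial coefficient. -/
/-!
Write `m₀ = k - (m₁ + ⋯ + m_k)`; then the summand is the multinomial coefficient of
`(m₀, m₁, …, m_k)`, and by the multinomial theorem the sum is the coefficient of `x^k` in
`(1 + x + ⋯ + x^k)^k`. Up to degree `k` this polynomial agrees with `(1 - x)⁻¹`, so the
coefficient is that of `x^k` in `(1 - x)^(-k)`, namely `C(2k - 1, k - 1) = C(2k, k) / 2`.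
-/

open Finset PowerSeries
open scoped Nat

theorem coeff_sum_X_pow_pow {R ι : Type*} [CommSemiring R] [Fintype ι] [DecidableEq ι]
    (w : ι → ℕ) (k n : ℕ) :
    coeff n ((∑ i, (X : R⟦X⟧) ^ w i) ^ k) =
      ∑ f ∈ (piAntidiag univ k).filter (fun f => ∑ i, w i * f i = n),
        (Nat.multinomial univ f : R) := by
  rw [sum_pow_eq_sum_piAntidiag, map_sum, sum_filter]
  refine sum_congr rfl fun f _ => ?_
  simp_rw [← pow_mul, prod_pow_eq_pow_sum, ← map_natCast (C (R := R)), coeff_C_mul_X_pow,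
    eq_comm (a := n)]

theorem coe_trunc_mk_one {R : Type*} [CommSemiring R] (n : ℕ) :
    ((trunc n (mk 1) : Polynomial R) : R⟦X⟧) = ∑ i ∈ range n, X ^ i := by
  ext m
  simp [coeff_trunc, coeff_X_pow]

theorem coeff_geomSum_pow {R : Type*} [CommRing R] (n d : ℕ) :
    coeff n ((∑ i ∈ range (n + 1), (X : R⟦X⟧) ^ i) ^ (d + 1)) = (d + n).choose d := by
  rw [← coe_trunc_mk_one, ← coeff_coe_trunc_of_lt (lt_add_one n), trunc_trunc_pow,
    coeff_coe_trunc_of_lt (lt_add_one n), mk_one_pow_eq_mk_choose_add, coeff_mk]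

theorem choose_two_mul_succ_succ (n : ℕ) :
    (2 * (n + 1)).choose (n + 1) = 2 * (n + (n + 1)).choose n := by
  rw [two_mul, ← add_assoc, Nat.choose_succ_succ', add_comm n (n + 1), Nat.choose_symm_add,
    ← two_mul]

section Reindexing

variable {d n : ℕ}

theorem sum_le_sum_succ_mul (m : Fin d → ℕ) : ∑ i, m i ≤ ∑ i : Fin d, (i.val + 1) * m i :=
  sum_le_sum fun i _ => Nat.le_mul_of_pos_left _ i.val.succ_pos

theorem sum_val_mul_cons (a : ℕ) (m : Fin d → ℕ) :
    ∑ i : Fin (d + 1), (i : ℕ) * (Fin.cons a m : Fin (d + 1) → ℕ) i =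
      ∑ i : Fin d, (i.val + 1) * m i := by
  simp [Fin.sum_univ_succ]

theorem sum_cons_sub_sum (m : Fin d → ℕ) (h : ∑ i, m i ≤ n) :
    ∑ i, (Fin.cons (n - ∑ i, m i) m : Fin (d + 1) → ℕ) i = n := by
  simp [Fin.sum_univ_succ, Nat.sub_add_cancel h]

theorem multinomial_cons_sub_sum {K : Type*} [Field K] [CharZero K] (m : Fin d → ℕ)
    (h : ∑ i, m i ≤ n) :
    (Nat.multinomial univ (Fin.cons (n - ∑ i, m i) m : Fin (d + 1) → ℕ) : K) =
      n ! / ((∏ i, ((m i)! : K)) * ((n - ∑ i, m i)! : K)) := by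
  have spec := Nat.multinomial_spec univ (Fin.cons (n - ∑ i, m i) m : Fin (d + 1) → ℕ)
  rw [sum_cons_sub_sum m h, Fin.prod_univ_succ] at spec
  rw [eq_div_iff (by simp [Finset.prod_eq_zero_iff, Nat.factorial_ne_zero]), ← spec]
  simp only [Fin.cons_zero, Fin.cons_succ]
  push_cast
  ring

theorem sum_filter_piFinset_eq_sum_filter_piAntidiag {M : Type*} [AddCommMonoid M]
    (g : (Fin (d + 1) → ℕ) → M) :
    ∑ m ∈ (Fintype.piFinset fun _ : Fin d => range (n + 1)).filter
        (fun m => ∑ i : Fin d, (i.val + 1) * m i = n), g (Fin.cons (n - ∑ i, m i) m) =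
      ∑ f ∈ (piAntidiag univ n).filter (fun f => ∑ i : Fin (d + 1), (i : ℕ) * f i = n), g f := by
  refine sum_nbij' (fun m => Fin.cons (n - ∑ i, m i) m) Fin.tail ?_ ?_ ?_ ?_ fun _ _ => rfl
  · intro m hm
    simp only [mem_filter, Fintype.mem_piFinset, mem_range] at hm
    have hle : ∑ i, m i ≤ n := (sum_le_sum_succ_mul m).trans hm.2.le
    simp [mem_filter, mem_piAntidiag, sum_val_mul_cons, hm.2, sum_cons_sub_sum m hle]
  · intro f hf
    simp only [mem_filter, mem_piAntidiag, mem_univ, implies_true, and_true] at hf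
    have hweight := sum_val_mul_cons (f 0) (Fin.tail f)
    rw [Fin.cons_self_tail, hf.2] at hweight
    simp only [mem_filter, Fintype.mem_piFinset, mem_range, ← hweight, and_true]
    exact fun i => Nat.lt_succ_of_le
      (hf.1 ▸ single_le_sum (f := f) (fun _ _ => Nat.zero_le _) (mem_univ i.succ))
  · intro m _
    exact Fin.tail_cons _ _
  · intro f hf
    simp only [mem_filter, mem_piAntidiag, mem_univ, implies_true, and_true] at hf
    have hsplit : f 0 + ∑ i, Fin.tail f i = n := by rw [← hf.1, Fin.sum_univ_succ]; rfl
    conv_rhs => rw [← Fin.cons_self_tail f, ← Nat.add_sub_cancel (n := f 0), hsplit]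

end Reindexing

theorem stmt_5 (k : ℕ) (hk : 0 < k) :
    ∑ m ∈ (Fintype.piFinset fun _ : Fin k => Finset.range (k + 1)).filter
        (fun m => ∑ i : Fin k, (i.val + 1) * m i = k),
      ((Nat.factorial k : ℚ) /
        ((∏ i : Fin k, (Nat.factorial (m i) : ℚ)) *
          (Nat.factorial (k - ∑ i : Fin k, m i) : ℚ)))
      = (Nat.choose (2 * k) k : ℚ) / 2 := by
  obtain ⟨j, rfl⟩ := Nat.exists_eq_add_one_of_ne_zero hk.ne'
  rw [sum_congr rfl fun m hm => (multinomial_cons_sub_sum (K := ℚ) m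
      ((sum_le_sum_succ_mul m).trans (mem_filter.mp hm).2.le)).symm,
    sum_filter_piFinset_eq_sum_filter_piAntidiag (fun f => (Nat.multinomial univ f : ℚ)),
    ← coeff_sum_X_pow_pow, Fin.sum_univ_eq_sum_range (fun i => (X : ℚ⟦X⟧) ^ i),
    coeff_geomSum_pow, choose_two_mul_succ_succ]
  push_cast
  ring
end

section
/- Let F satisfy (F1)–(F4), let x₀(k) be the unique solution of F(x) = k and x₁(n) the unique solution of F(x) = n·x (for large arguments). Then for each constant C > e and every sufficiently large n, there exists a positive integer k ≥ n·x₁(n)/C² such that (C·k/(n·x₀(k)))^k ≤ exp(−n·x₁(n)/C² + 1). -/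
/-!
Write `T = n x₁(n)` and take `k = ⌈T / C²⌉`. Since `F(x₀(k)) = k ≤ T = F(x₁(n))` and `F` is
decreasing, `x₀(k) ≥ x₁(n)`, so `C k / (n x₀(k)) ≤ C k / T`. As `T → ∞` with `n`,
`C k ≤ T / C + C ≤ T / e` eventually because `C > e`; hence the `k`-th power is at most
`e^{-k} ≤ e^{-T / C²}`.
-/

open Set Filter Topology Real

theorem tendsto_mul_atTop_of_apply_eq_mul {F x : ℝ → ℝ} (htop : Tendsto F (𝓝[>] 0) atTop)
    (hx : ∀ᶠ t in atTop, 0 < x t ∧ F (x t) = t * x t) :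
    Tendsto (fun t => t * x t) atTop atTop := by
  refine tendsto_atTop.2 fun M => ?_
  obtain ⟨δ, hδ, hFδ⟩ := mem_nhdsGT_iff_exists_Ioo_subset.1 (htop.eventually_ge_atTop M)
  filter_upwards [hx, eventually_ge_atTop (M / δ), eventually_ge_atTop 0]
    with t ⟨hxt, hFx⟩ htM ht₀
  rcases lt_or_ge (x t) δ with hlt | hge
  · exact hFx ▸ hFδ ⟨hxt, hlt⟩
  · calc M ≤ t * δ := (div_le_iff₀ hδ).1 htM
      _ ≤ t * x t := mul_le_mul_of_nonneg_left hge ht₀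

theorem mul_mul_ceil_div_sq_le {c C T : ℝ} (hc : 0 < c) (hcC : c < C)
    (hT : c * C ^ 2 / (C - c) ≤ T) : c * (C * ⌈T / C ^ 2⌉₊) ≤ T := by
  have hC : 0 < C := hc.trans hcC
  have hT' : c * C ^ 2 ≤ T * (C - c) := (div_le_iff₀ (sub_pos.2 hcC)).1 hT
  have hceil : (⌈T / C ^ 2⌉₊ : ℝ) < T / C ^ 2 + 1 :=
    Nat.ceil_lt_add_one (div_nonneg (by nlinarith) (by positivity))
  calc c * (C * ⌈T / C ^ 2⌉₊) ≤ c * (C * (T / C ^ 2 + 1)) := by gcongr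
    _ = (c * T + c * C ^ 2) / C := by field_simp
    _ ≤ T := by rw [div_le_iff₀ hC]; linarith

theorem pow_le_exp_neg_of_le_exp_neg_one {r : ℝ} (hr₀ : 0 ≤ r) (hr : r ≤ exp (-1)) (k : ℕ) :
    r ^ k ≤ exp (-k) := by
  calc r ^ k ≤ exp (-1) ^ k := pow_le_pow_left₀ hr₀ hr k
    _ = exp (-k) := by rw [← exp_nat_mul]; ring_nf

theorem pow_mul_ceil_div_sq_div_le {C T D : ℝ} (hC : exp 1 < C)
    (hT : exp 1 * C ^ 2 / (C - exp 1) ≤ T) (hTD : T ≤ D) :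
    (C * ⌈T / C ^ 2⌉₊ / D) ^ ⌈T / C ^ 2⌉₊ ≤ exp (-(T / C ^ 2)) := by
  have hC₀ : 0 < C := (exp_pos 1).trans hC
  have hD : 0 < D := lt_of_lt_of_le (by have := sub_pos.2 hC; positivity) (hT.trans hTD)
  have hCk : exp 1 * (C * ⌈T / C ^ 2⌉₊) ≤ T := mul_mul_ceil_div_sq_le (exp_pos 1) hC hT
  have hratio : C * ⌈T / C ^ 2⌉₊ / D ≤ exp (-1) := by
    rw [div_le_iff₀ hD, exp_neg, inv_mul_eq_div, le_div_iff₀ (exp_pos 1)]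
    linarith
  calc (C * ⌈T / C ^ 2⌉₊ / D) ^ ⌈T / C ^ 2⌉₊ ≤ exp (-⌈T / C ^ 2⌉₊) :=
        pow_le_exp_neg_of_le_exp_neg_one (by positivity) hratio _
    _ ≤ exp (-(T / C ^ 2)) := exp_le_exp.2 (neg_le_neg (Nat.le_ceil _))

theorem stmt_9_general (A : ℝ)
    (F : ℝ → ℝ)
    (hanti : StrictAntiOn F (Set.Ioc 0 A))
    (htop : Filter.Tendsto F (nhdsWithin 0 (Set.Ioi 0)) Filter.atTop)
    (x₀ x₁ : ℝ → ℝ)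
    (hx₀ : ∀ t : ℝ, F A ≤ t → x₀ t ∈ Set.Ioc 0 A ∧ F (x₀ t) = t)
    (hx₁ : ∀ t : ℝ, F A / A ≤ t → x₁ t ∈ Set.Ioc 0 A ∧ F (x₁ t) = t * x₁ t) :
    ∀ C : ℝ, Real.exp 1 < C → ∃ N : ℕ, ∀ n : ℕ, N ≤ n →
      ∃ k : ℕ, (n : ℝ) * x₁ n / C ^ 2 ≤ k ∧
        (C * k / (n * x₀ k)) ^ k ≤ Real.exp (-(1 / C ^ 2) * n * x₁ n + 1) := by
  intro C hC
  have hT : Tendsto (fun n : ℕ => (n : ℝ) * x₁ n) atTop atTop :=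
    (tendsto_mul_atTop_of_apply_eq_mul htop <| (eventually_ge_atTop (F A / A)).mono
      fun t ht => ⟨(hx₁ t ht).1.1, (hx₁ t ht).2⟩).comp tendsto_natCast_atTop_atTop
  obtain ⟨N, hN⟩ := eventually_atTop.1 <|
    (tendsto_natCast_atTop_atTop.eventually_ge_atTop (F A / A)).and <|
      (hT.eventually_ge_atTop (C ^ 2 * F A)).and
        (hT.eventually_ge_atTop (exp 1 * C ^ 2 / (C - exp 1)))
  refine ⟨N, fun n hn => ?_⟩
  obtain ⟨hnA, hTF, hTe⟩ := hN n hn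
  set T := (n : ℝ) * x₁ n
  set k := ⌈T / C ^ 2⌉₊
  have hk : T / C ^ 2 ≤ k := Nat.le_ceil _
  have hkT : (k : ℝ) ≤ T := by
    have : 1 ≤ exp 1 * C := by nlinarith [add_one_le_exp 1]
    calc (k : ℝ) ≤ exp 1 * C * k := le_mul_of_one_le_left k.cast_nonneg this
      _ ≤ T := by rw [mul_assoc]; exact mul_mul_ceil_div_sq_le (exp_pos 1) hC hTe
  have hFk : F A ≤ k := ((le_div_iff₀ (pow_pos ((exp_pos 1).trans hC) 2)).2 (by linarith)).trans hk
  obtain ⟨hx₀k, hFx₀⟩ := hx₀ k hFk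
  obtain ⟨hx₁n, hFx₁⟩ := hx₁ n hnA
  have hx : x₁ n ≤ x₀ k := (hanti.le_iff_ge hx₀k hx₁n).1 (by rw [hFx₀, hFx₁]; exact hkT)
  refine ⟨k, hk, (pow_mul_ceil_div_sq_div_le hC hTe
    (mul_le_mul_of_nonneg_left hx n.cast_nonneg)).trans (exp_le_exp.2 ?_)⟩
  have : -(1 / C ^ 2) * n * x₁ n = -(T / C ^ 2) := by ring
  linarith

theorem stmt_9 (A A₁ A₂ : ℝ) (hA : 0 < A) (hA₁ : 0 < A₁) (hA₂ : 0 < A₂)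
    (F F' : ℝ → ℝ)
    (hFpos : ∀ x ∈ Set.Ioc 0 A, 0 < F x)
    (hanti : StrictAntiOn F (Set.Ioc 0 A))
    (htop : Filter.Tendsto F (nhdsWithin 0 (Set.Ioi 0)) Filter.atTop)
    (hderiv : ∀ x ∈ Set.Ioc 0 A, HasDerivAt F (F' x) x)
    (hlow : ∀ x ∈ Set.Ioc 0 A, A₂ * F x / x ≤ -F' x)
    (hup : ∀ x ∈ Set.Ioc 0 A, -F' x ≤ A₁ * F x / x)
    (x₀ x₁ : ℝ → ℝ)
    (hx₀ : ∀ t : ℝ, F A ≤ t → x₀ t ∈ Set.Ioc 0 A ∧ F (x₀ t) = t)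
    (hx₁ : ∀ t : ℝ, F A / A ≤ t → x₁ t ∈ Set.Ioc 0 A ∧ F (x₁ t) = t * x₁ t) :
    ∀ C : ℝ, Real.exp 1 < C → ∃ N : ℕ, ∀ n : ℕ, N ≤ n →
      ∃ k : ℕ, (n : ℝ) * x₁ n / C ^ 2 ≤ k ∧
        (C * k / (n * x₀ k)) ^ k ≤ Real.exp (-(1 / C ^ 2) * n * x₁ n + 1) :=
  stmt_9_general A F hanti htop x₀ x₁ hx₀ hx₁
end

section
/- Let g : 𝕋 → ℝ be of the form g(t) = (t−a₁)⋯(t−a_m)·h(t) locally, where a₁,…,a_m are the distinct zeros of g on the circle (each simple) and |h(t)| ≥ b > 0 everywhere. Then there is a constant C = C(g) such that for every ε > 0 the sublevel set B_ε = {t ∈ 𝕋 : |g(t)| < ε} has Lebesgue measure |B_ε| ≤ C·ε. One may take C = 2mS/b where S = (3/min_{i<j}|a_i−a_j|)^{m−1}. -/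
/-!
Near the zero `aᵢ` closest to `t`, every other factor `|t - aⱼ|` is at least `d / 2`, so
`|g t| ≥ (d / 2) ^ (m - 1) * b * |t - aᵢ|`. Hence `|g t| < ε` forces `t` into one of the `m`
intervals of radius `(2 / d) ^ (m - 1) * ε / b` around the zeros, and `2 / d ≤ 3 / d`.
-/

open Set MeasureTheory Real

theorem exists_pow_mul_dist_le_prod_dist {X ι : Type*} [PseudoMetricSpace X] [Fintype ι]
    [Nonempty ι] {a : ι → X} {d : ℝ} (hd : 0 ≤ d)
    (hsep : Pairwise fun i j => d ≤ dist (a i) (a j)) (t : X) :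
    ∃ i, (d / 2) ^ (Fintype.card ι - 1) * dist t (a i) ≤ ∏ j, dist t (a j) := by
  classical
  obtain ⟨i, -, hi⟩ := Finset.univ.exists_min_image (fun j => dist t (a j)) Finset.univ_nonempty
  refine ⟨i, ?_⟩
  have hfar : ∀ j ∈ Finset.univ.erase i, d / 2 ≤ dist t (a j) := fun j hj => by
    have := hsep (Finset.ne_of_mem_erase hj).symm
    have := dist_triangle_left (a i) (a j) t
    linarith [hi j (Finset.mem_univ j)]
  have hcard : (Finset.univ.erase i).card = Fintype.card ι - 1 := by
    rw [Finset.card_erase_of_mem (Finset.mem_univ i), Finset.card_univ]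
  rw [← Finset.prod_erase_mul Finset.univ _ (Finset.mem_univ i), ← hcard, ← Finset.prod_const]
  gcongr with j hj
  exact hfar j hj

theorem sublevel_subset_iUnion_ball {ι : Type*} [Fintype ι] [Nonempty ι] {s : Set ℝ}
    {a : ι → ℝ} {g h : ℝ → ℝ} {b d ε : ℝ} (hb : 0 < b) (hd : 0 < d)
    (hsep : Pairwise fun i j => d ≤ |a i - a j|)
    (hfac : ∀ t ∈ s, g t = (∏ i, (t - a i)) * h t) (hh : ∀ t ∈ s, b ≤ |h t|) :
    {t ∈ s | |g t| < ε} ⊆ ⋃ i, Metric.ball (a i) (ε / ((d / 2) ^ (Fintype.card ι - 1) * b)) := by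
  rintro t ⟨ht, hgt⟩
  obtain ⟨i, hi⟩ := exists_pow_mul_dist_le_prod_dist (a := a) hd.le
    (fun i j hij => by simpa only [Real.dist_eq] using hsep hij) t
  have hlower : (d / 2) ^ (Fintype.card ι - 1) * dist t (a i) * b ≤ |g t| := by
    rw [hfac t ht, abs_mul, Finset.abs_prod]
    simp only [Real.dist_eq] at hi
    exact mul_le_mul hi (hh t ht) hb.le (by positivity)
  refine mem_iUnion.mpr ⟨i, ?_⟩
  rw [Metric.mem_ball, lt_div_iff₀ (by positivity)]
  linarith

theorem volume_iUnion_ball_le {ι : Type*} [Fintype ι] (a : ι → ℝ) (r : ℝ) :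
    volume (⋃ i, Metric.ball (a i) r) ≤ ENNReal.ofReal (Fintype.card ι * (2 * r)) := by
  calc volume (⋃ i, Metric.ball (a i) r)
      ≤ ∑ i, volume (Metric.ball (a i) r) := measure_iUnion_fintype_le _ _
    _ = ENNReal.ofReal (Fintype.card ι * (2 * r)) := by
      simp only [Real.volume_ball, Finset.sum_const, Finset.card_univ, nsmul_eq_mul]
      rw [ENNReal.ofReal_mul (Nat.cast_nonneg _), ENNReal.ofReal_natCast, two_mul]

theorem stmt_11 (m : ℕ) (hm : 1 ≤ m) (a : Fin m → ℝ) (g h : ℝ → ℝ) (b d : ℝ)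
    (hb : 0 < b) (hd : 0 < d)
    (hsep : ∀ i j : Fin m, i ≠ j → d ≤ |a i - a j|)
    (hfac : ∀ t ∈ Set.Icc (-Real.pi) Real.pi, g t = (∏ i : Fin m, (t - a i)) * h t)
    (hh : ∀ t ∈ Set.Icc (-Real.pi) Real.pi, b ≤ |h t|) :
    ∀ ε : ℝ, 0 < ε →
      MeasureTheory.volume {t ∈ Set.Icc (-Real.pi) Real.pi | |g t| < ε} ≤
        ENNReal.ofReal (2 * m * (3 / d) ^ (m - 1) / b * ε) := by
  intro ε hε
  have : Nonempty (Fin m) := Fin.pos_iff_nonempty.mp hm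
  refine (measure_mono (sublevel_subset_iUnion_ball hb hd hsep hfac hh)).trans
    ((volume_iUnion_ball_le a _).trans (ENNReal.ofReal_le_ofReal ?_))
  have hradius : ε / ((d / 2) ^ (m - 1) * b) = (2 / d) ^ (m - 1) / b * ε := by
    rw [div_pow, div_pow]
    field_simp
  rw [Fintype.card_fin, hradius]
  have : (2 / d) ^ (m - 1) ≤ (3 / d) ^ (m - 1) := by gcongr; norm_num
  have : 0 ≤ ε / b := by positivity
  calc (m : ℝ) * (2 * ((2 / d) ^ (m - 1) / b * ε))
      = 2 * m * (ε / b) * (2 / d) ^ (m - 1) := by ring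
    _ ≤ 2 * m * (ε / b) * (3 / d) ^ (m - 1) := by gcongr
    _ = 2 * m * (3 / d) ^ (m - 1) / b * ε := by ring
end

section
/- For every positive integer n and every real x > 1 + 1/n², the Chebyshev polynomial T_n satisfies the logarithmic-derivative lower bound T_n'(x)/T_n(x) ≥ (1/4)·n/√(x²−1). -/
/-!
Write `x = cosh θ` with `θ = arcosh x > 0`. Then `T_n(x) = cosh (nθ)` and
`T_n'(x) sinh θ = n sinh (nθ)`, so `T_n'(x) / T_n(x) = n tanh (nθ) / √(x² - 1)`.
The hypothesis gives `√(x² - 1) ≥ 1/n`, hence `e^θ = x + √(x² - 1) ≥ 1 + 1/n` and by Bernoulli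
`e^{nθ} ≥ 2`, which forces `tanh (nθ) ≥ 3/5 ≥ 1/4`.
-/

open Polynomial

namespace Polynomial.Chebyshev

open Real

theorem T_derivative_real_cosh (θ : ℝ) (n : ℤ) :
    (derivative (T ℝ n)).eval (cosh θ) * sinh θ = n * sinh (n * θ) := by
  rw [T_derivative_eq_U, eval_mul, eval_intCast, mul_assoc, U_real_cosh]
  push_cast
  ring_nf

theorem T_derivative_div_T_real_cosh {θ : ℝ} (hθ : θ ≠ 0) (n : ℤ) :
    (derivative (T ℝ n)).eval (cosh θ) / (T ℝ n).eval (cosh θ) = n * tanh (n * θ) / sinh θ := by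
  have hsinh : sinh θ ≠ 0 := sinh_ne_zero.mpr hθ
  rw [T_real_cosh, tanh_eq_sinh_div_cosh, eq_div_iff hsinh, div_mul_eq_mul_div,
    T_derivative_real_cosh, mul_div_assoc]

end Polynomial.Chebyshev

namespace Real

theorem three_fifths_le_tanh {y : ℝ} (hy : 2 ≤ exp y) : 3 / 5 ≤ tanh y := by
  rw [tanh_eq_sinh_div_cosh, sinh_eq, cosh_eq, exp_neg, le_div_iff₀ (by positivity)]
  have : 0 < (exp y)⁻¹ := by positivity
  have : exp y * (exp y)⁻¹ = 1 := mul_inv_cancel₀ (exp_pos y).ne'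
  nlinarith

theorem one_div_le_sqrt_sq_sub_one {n x : ℝ} (hx : 1 + 1 / n ^ 2 < x) :
    1 / n ≤ √(x ^ 2 - 1) := by
  apply le_sqrt_of_sq_le
  have : 0 ≤ 1 / n ^ 2 := by positivity
  rw [div_pow, one_pow]
  nlinarith

theorem two_le_exp_nat_mul_arcosh {n : ℕ} (hn : 0 < n) {x : ℝ} (hx : 1 + 1 / (n : ℝ) ^ 2 < x) :
    2 ≤ exp (n * arcosh x) := by
  have hn' : (0 : ℝ) < n := by exact_mod_cast hn
  have hx1 : 1 ≤ x := by linarith [show 0 ≤ 1 / (n : ℝ) ^ 2 by positivity]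
  calc (2 : ℝ) = 1 + n * (1 / n) := by field_simp; ring
    _ ≤ (1 + 1 / n) ^ n := one_add_mul_le_pow (by linarith [show 0 ≤ 1 / (n : ℝ) by positivity]) n
    _ ≤ exp (arcosh x) ^ n := by
      rw [exp_arcosh hx1]
      gcongr
      linarith [one_div_le_sqrt_sq_sub_one hx]
    _ = exp (n * arcosh x) := (exp_nat_mul _ _).symm

end Real

theorem stmt_13 (n : ℕ) (hn : 0 < n) :
    ∀ x : ℝ, 1 + 1 / (n : ℝ) ^ 2 < x →
      (1 / 4) * n / Real.sqrt (x ^ 2 - 1) ≤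
        (Polynomial.derivative (Polynomial.Chebyshev.T ℝ n)).eval x /
          (Polynomial.Chebyshev.T ℝ n).eval x := by
  intro x hx
  have hx1 : 1 < x := by linarith [show 0 ≤ 1 / (n : ℝ) ^ 2 by positivity]
  have htanh : 1 / 4 ≤ Real.tanh (n * Real.arcosh x) := by
    linarith [Real.three_fifths_le_tanh (Real.two_le_exp_nat_mul_arcosh hn hx)]
  set θ := Real.arcosh x
  have hθ : 0 < θ := Real.arcosh_pos hx1
  have hsinh : Real.sinh θ = √(x ^ 2 - 1) := Real.sinh_arcosh hx1.le
  have hcosh : Real.cosh θ = x := Real.cosh_arcosh hx1.le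
  rw [← hsinh, ← hcosh, ← Int.cast_natCast,
    Chebyshev.T_derivative_div_T_real_cosh hθ.ne']
  push_cast
  gcongr ?_ / _
  rw [mul_comm (1 / 4 : ℝ)]
  gcongr
end

section
/- Assume F satisfies (F1)–(F4), x₁ solves F(x₁(n)) = n·x₁(n), and suppose the 'stretching' property holds: for each L > 0 there is Q = Q(L) > 1 with F(x₁(n)/L) ≤ Q·n·x₁(n) for large n. Then for all x ∈ [x₁(n)/L, A], F(x) ≤ Q·L·n·x. Consequently, if |F'(g(t))·g'(t)| ≥ M·n with M > Q·L·A₁·‖g'‖_∞, then |g(t)| < x₁(n)/L. -/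
/-!
Antitonicity carries the stretching bound `F (x₁/L) ≤ Q n x₁ = Q L n (x₁/L)` from the left
endpoint to the whole interval `[x₁/L, A]`, where `Q L n x` only grows. On that interval
`|F'(x)| ≤ A₁ F(x)/x ≤ A₁ Q L n`, so `|F'(g t) g'(t)| ≤ Q L A₁ D n < M n`; by evenness of
`|F'|` only `|g t|` matters, so `M n ≤ |F'(g t) g'(t)|` forces `|g t| < x₁/L`.
-/

open Set

lemma apply_abs_eq_of_even {f : ℝ → ℝ} (hf : ∀ x, f (-x) = f x) (x : ℝ) : f |x| = f x :=
  abs_by_cases (fun y => f y = f x) rfl (hf x)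

lemma le_mul_of_antitoneOn_of_le_mul_left {F : ℝ → ℝ} {A a c x : ℝ}
    (hanti : AntitoneOn F (Ioc 0 A)) (ha : 0 < a) (haA : a ≤ A) (hc : 0 ≤ c)
    (hFa : F a ≤ c * a) (hax : a ≤ x) (hxA : x ≤ A) : F x ≤ c * x :=
  calc F x ≤ F a := hanti ⟨ha, haA⟩ ⟨ha.trans_le hax, hxA⟩ hax
    _ ≤ c * a := hFa
    _ ≤ c * x := mul_le_mul_of_nonneg_left hax hc

lemma abs_mul_le_of_abs_le_mul_div {F F' : ℝ → ℝ} {A₁ c D y v : ℝ} (hA₁ : 0 ≤ A₁)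
    (hy : 0 < y) (hF' : |F' y| ≤ A₁ * F y / y) (hFy : F y ≤ c * y) (hv : |v| ≤ D) :
    |F' y * v| ≤ c * A₁ * D := by
  have hF'c : |F' y| ≤ c * A₁ :=
    calc |F' y| ≤ A₁ * F y / y := hF'
      _ ≤ A₁ * (c * y) / y := by gcongr
      _ = c * A₁ := by field_simp
  rw [abs_mul]
  exact mul_le_mul hF'c hv (abs_nonneg v) ((abs_nonneg _).trans hF'c)

theorem stmt_18_general (A A₁ D L Q M n : ℝ)
    (hA₁ : 0 < A₁) (hL : 0 < L)
    (hQ : 1 < Q) (hn : 0 < n)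
    (F F' : ℝ → ℝ)
    (hF'even : ∀ x, |F' (-x)| = |F' x|)
    (hanti : AntitoneOn F (Set.Ioc 0 A))
    (hup : ∀ x ∈ Set.Ioc 0 A, |F' x| ≤ A₁ * F x / x)
    (x₁ : ℝ) (hx₁mem : x₁ ∈ Set.Ioc 0 A)
    (hLA : x₁ / L ≤ A)
    (hstretch : F (x₁ / L) ≤ Q * n * x₁)
    (g g' : ℝ → ℝ)
    (hM : Q * L * A₁ * D < M) :
    (∀ x : ℝ, x₁ / L ≤ x → x ≤ A → F x ≤ Q * L * n * x) ∧
    (∀ t : ℝ, g t ≠ 0 → |g t| ≤ A → |g' t| ≤ D →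
      M * n ≤ |F' (g t) * g' t| → |g t| < x₁ / L) := by
  have hstretch' : F (x₁ / L) ≤ Q * L * n * (x₁ / L) := by
    convert hstretch using 1
    field_simp
  have hF_le : ∀ x : ℝ, x₁ / L ≤ x → x ≤ A → F x ≤ Q * L * n * x := fun x =>
    le_mul_of_antitoneOn_of_le_mul_left hanti (div_pos hx₁mem.1 hL) hLA (by positivity) hstretch'
  refine ⟨hF_le, fun t hg0 hgA hg'D hMn => ?_⟩
  by_contra! hfar
  have hy : |g t| ∈ Ioc 0 A := ⟨abs_pos.mpr hg0, hgA⟩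
  have hbound : |F' (g t) * g' t| ≤ Q * L * n * A₁ * D := by
    rw [abs_mul, ← apply_abs_eq_of_even (f := fun x => |F' x|) hF'even, ← abs_mul]
    exact abs_mul_le_of_abs_le_mul_div hA₁.le hy.1 (hup _ hy) (hF_le _ hfar hgA) hg'D
  have hlt : Q * L * A₁ * D * n < M * n := mul_lt_mul_of_pos_right hM hn
  linarith

theorem stmt_18 (A A₁ A₂ D L Q M n : ℝ)
    (hA : 0 < A) (hA₁ : 0 < A₁) (hA₂ : 0 < A₂) (hD : 0 < D) (hL : 0 < L)
    (hQ : 1 < Q) (hn : 0 < n)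
    (F F' : ℝ → ℝ)
    (hFpos : ∀ x ∈ Set.Ioc 0 A, 0 < F x)
    (hFeven : ∀ x, F (-x) = F x)
    (hF'even : ∀ x, |F' (-x)| = |F' x|)
    (hanti : AntitoneOn F (Set.Ioc 0 A))
    (hup : ∀ x ∈ Set.Ioc 0 A, |F' x| ≤ A₁ * F x / x)
    (x₁ : ℝ) (hx₁mem : x₁ ∈ Set.Ioc 0 A) (hx₁ : F x₁ = n * x₁)
    (hLA : x₁ / L ≤ A)
    (hstretch : F (x₁ / L) ≤ Q * n * x₁)
    (g g' : ℝ → ℝ)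
    (hM : Q * L * A₁ * D < M) :
    (∀ x : ℝ, x₁ / L ≤ x → x ≤ A → F x ≤ Q * L * n * x) ∧
    (∀ t : ℝ, g t ≠ 0 → |g t| ≤ A → |g' t| ≤ D →
      M * n ≤ |F' (g t) * g' t| → |g t| < x₁ / L) :=
  stmt_18_general A A₁ D L Q M n hA₁ hL hQ hn F F' hF'even hanti hup x₁ hx₁mem hLA hstretch g g' hM
end

section
/- Let c_n > 0 decrease to 0 and define ξ = log ω for an increasing continuous weight ω on (0,ε) with ω(0+) = 0, satisfying ξ((1−1/n)c_n)/ξ(c_n) > n² for every n. Set λ_n = 1 − 1/n, a_n = c_n/λ_n, and K_n = 2·⌊−ξ(c_n)/(λ_n a_n √(1−λ_n²))⌋. Then K_n → ∞, K_n λ_n a_n √(1−λ_n²) + ξ(λ_n a_n) → ∞, and for each r ∈ (0,1), 2K_n a_n + ξ(r a_n) → −∞ as n → ∞. -/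
/-!
Write `D_n = λ_n a_n √(1 - λ_n²) = c_n √(1 - λ_n²)`, which tends to `0⁺`, and `X_n = -ξ(c_n) → ∞`.
Then `K_n = 2⌊X_n / D_n⌋` satisfies `2X_n - 2D_n < K_n D_n ≤ 2X_n`; the lower bound gives
`K_n → ∞` and `K_n D_n + ξ(c_n) ≥ X_n - 2D_n → ∞`. Since `1 - λ_n² ≥ 1/n`, we have
`λ_n √(1 - λ_n²) ≥ 1/(2n)`, so the upper bound gives `2K_n a_n ≤ 8n X_n`. Once `r < λ_n²`,
monotonicity and the ratio hypothesis give `ξ(r a_n) < ξ(λ_n c_n) < n² ξ(c_n) = -n² X_n`,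
and the `n²` term dominates.
-/

open Set Filter Topology

theorem sub_lt_natFloor_div_mul (x : ℝ) {D : ℝ} (hD : 0 < D) : x - D < ⌊x / D⌋₊ * D :=
  calc x - D = (x / D - 1) * D := by field_simp
    _ < ⌊x / D⌋₊ * D := mul_lt_mul_of_pos_right (Nat.sub_one_lt_floor _) hD

theorem natFloor_div_mul_le {x D : ℝ} (hx : 0 ≤ x) (hD : 0 < D) : ⌊x / D⌋₊ * D ≤ x :=
  calc ⌊x / D⌋₊ * D ≤ x / D * D :=
        mul_le_mul_of_nonneg_right (Nat.floor_le (div_nonneg hx hD.le)) hD.le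
    _ = x := div_mul_cancel₀ x hD.ne'

theorem two_mul_natFloor_div_mul_le {x l a s : ℝ} {n : ℕ} (hx : 0 ≤ x) (ha : 0 ≤ a)
    (hD : 0 < l * a * s) (hn : 1 ≤ 2 * n * (l * s)) :
    2 * ((2 * ⌊x / (l * a * s)⌋₊ : ℕ) : ℝ) * a ≤ 8 * n * x := by
  push_cast
  calc 2 * (2 * (⌊x / (l * a * s)⌋₊ : ℝ)) * a
      ≤ 2 * (2 * (⌊x / (l * a * s)⌋₊ : ℝ)) * a * (2 * n * (l * s)) :=
        le_mul_of_one_le_right (by positivity) hn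
    _ = 8 * n * (⌊x / (l * a * s)⌋₊ * (l * a * s)) := by ring
    _ ≤ 8 * n * x := by gcongr; exact natFloor_div_mul_le hx hD

section FloorQuotient

variable {X D : ℕ → ℝ}

theorem tendsto_two_mul_natFloor_div_atTop (hX : Tendsto X atTop atTop)
    (hD : Tendsto D atTop (𝓝[>] 0)) :
    Tendsto (fun n => 2 * ⌊X n / D n⌋₊) atTop atTop := by
  simp only [div_eq_mul_inv]
  exact (tendsto_nat_floor_atTop.comp
    (hX.atTop_mul_atTop₀ hD.inv_tendsto_nhdsGT_zero)).const_mul_atTop' two_pos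

theorem tendsto_two_mul_natFloor_div_mul_sub_atTop (hX : Tendsto X atTop atTop)
    (hD : Tendsto D atTop (𝓝[>] 0)) :
    Tendsto (fun n => ((2 * ⌊X n / D n⌋₊ : ℕ) : ℝ) * D n - X n) atTop atTop := by
  obtain ⟨hD0, hDpos⟩ := tendsto_nhdsWithin_iff.1 hD
  have hlower : Tendsto (fun n => X n + -2 * D n) atTop atTop := by
    simpa using hX.atTop_add (hD0.const_mul (-2))
  refine tendsto_atTop_mono' _ ?_ hlower
  filter_upwards [hDpos] with n hn
  have := sub_lt_natFloor_div_mul (X n) (show 0 < D n from hn)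
  push_cast
  linarith

end FloorQuotient

theorem one_sub_inv_pos {n : ℕ} (hn : 1 < n) : 0 < 1 - 1 / (n : ℝ) :=
  sub_pos.2 ((div_lt_one (by positivity)).2 (by exact_mod_cast hn))

theorem half_le_one_sub_inv {n : ℕ} (hn : 2 ≤ n) : 1 / 2 ≤ 1 - 1 / (n : ℝ) := by
  have : 1 / (n : ℝ) ≤ 1 / 2 := one_div_le_one_div_of_le two_pos (by exact_mod_cast hn)
  linarith

theorem inv_le_sqrt_one_sub_sq_one_sub_inv {n : ℕ} (hn : 1 ≤ n) :
    1 / (n : ℝ) ≤ √(1 - (1 - 1 / n) ^ 2) := by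
  have hn' : (1 : ℝ) ≤ n := by exact_mod_cast hn
  have hq : 1 - (1 - 1 / (n : ℝ)) ^ 2 = 1 / n + (n - 1) / n ^ 2 := by field_simp; ring
  have hle : 1 / (n : ℝ) ≤ 1 - (1 - 1 / n) ^ 2 := by
    have : 0 ≤ ((n : ℝ) - 1) / n ^ 2 := by positivity
    linarith
  have hle1 : 1 - (1 - 1 / (n : ℝ)) ^ 2 ≤ 1 := by nlinarith
  exact hle.trans (Real.le_sqrt_self_iff.2 hle1)

theorem sqrt_one_sub_sq_one_sub_inv_pos {n : ℕ} (hn : 1 ≤ n) :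
    0 < √(1 - (1 - 1 / (n : ℝ)) ^ 2) :=
  (one_div_pos.2 (by positivity)).trans_le (inv_le_sqrt_one_sub_sq_one_sub_inv hn)

theorem one_le_two_mul_mul_sqrt_one_sub_sq_one_sub_inv {n : ℕ} (hn : 2 ≤ n) :
    1 ≤ 2 * n * ((1 - 1 / (n : ℝ)) * √(1 - (1 - 1 / n) ^ 2)) := by
  have hn0 : (0 : ℝ) < n := by positivity
  calc (1 : ℝ) = 2 * n * (1 / 2 * (1 / n)) := by field_simp
    _ ≤ _ := by
      have := half_le_one_sub_inv hn
      gcongr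
      exact inv_le_sqrt_one_sub_sq_one_sub_inv (by omega)

theorem tendsto_one_sub_inv_natCast : Tendsto (fun n : ℕ => 1 - 1 / (n : ℝ)) atTop (𝓝 1) := by
  simpa using (tendsto_const_nhds (x := (1 : ℝ))).sub tendsto_one_div_atTop_nhds_zero_nat

theorem tendsto_sqrt_one_sub_sq_one_sub_inv :
    Tendsto (fun n : ℕ => √(1 - (1 - 1 / (n : ℝ)) ^ 2)) atTop (𝓝 0) := by
  simpa using ((tendsto_const_nhds (x := (1 : ℝ))).sub (tendsto_one_sub_inv_natCast.pow 2)).sqrt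

theorem tendsto_mul_div_mul_sqrt_nhdsGT_zero {c : ℕ → ℝ} (hcpos : ∀ n, 0 < c n)
    (hc0 : Tendsto c atTop (𝓝 0)) :
    Tendsto (fun n : ℕ => (1 - 1 / (n : ℝ)) * (c n / (1 - 1 / n)) * √(1 - (1 - 1 / n) ^ 2))
      atTop (𝓝[>] 0) := by
  refine tendsto_nhdsWithin_iff.2
    ⟨(zero_mul (0 : ℝ) ▸ hc0.mul tendsto_sqrt_one_sub_sq_one_sub_inv).congr' ?_, ?_⟩ <;>
  filter_upwards [eventually_ge_atTop 2] with n hn <;>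
  rw [mul_div_cancel₀ _ (one_sub_inv_pos hn).ne']
  exact mul_pos (hcpos n) (sqrt_one_sub_sq_one_sub_inv_pos (by omega))

theorem two_mul_natFloor_mul_add_le {ε : ℝ} {ξ : ℝ → ℝ} (hmono : StrictMonoOn ξ (Ioo 0 ε))
    {n : ℕ} (hn : 9 ≤ n) {c l a r : ℝ} (hl : l = 1 - 1 / n) (ha : a = c / l)
    (hc : 0 < c) (hcε : c < ε) (hξc : ξ c < 0) (hratio : (n : ℝ) ^ 2 < ξ (l * c) / ξ c)
    (hr0 : 0 < r) (hr : r < l ^ 2) :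
    2 * ((2 * ⌊-ξ c / (l * a * √(1 - l ^ 2))⌋₊ : ℕ) : ℝ) * a + ξ (r * a) ≤ ξ c := by
  have hl0 : 0 < l := hl ▸ one_sub_inv_pos (by omega)
  have ha0 : 0 < a := ha ▸ div_pos hc hl0
  have hla : l * a = c := by rw [ha, mul_div_cancel₀ _ hl0.ne']
  have hlc : l * c < c := mul_lt_of_lt_one_left hc (hl ▸ sub_lt_self 1 (by positivity))
  have hra : r * a < l * c :=
    calc r * a < l ^ 2 * a := mul_lt_mul_of_pos_right hr ha0
      _ = l * c := by rw [← hla]; ring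
  have h_ra : ξ (r * a) < ξ (l * c) :=
    hmono ⟨mul_pos hr0 ha0, hra.trans (hlc.trans hcε)⟩ ⟨mul_pos hl0 hc, hlc.trans hcε⟩ hra
  have h_ratio : ξ (l * c) < n ^ 2 * ξ c := (lt_div_iff_of_neg hξc).1 hratio
  have hs : 0 < √(1 - l ^ 2) := hl ▸ sqrt_one_sub_sq_one_sub_inv_pos (by omega)
  have h_K := two_mul_natFloor_div_mul_le (neg_nonneg.2 hξc.le) ha0.le
    (by rw [hla]; exact mul_pos hc hs) (hl ▸ one_le_two_mul_mul_sqrt_one_sub_sq_one_sub_inv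
      (by omega : 2 ≤ n))
  have hn9 : (9 : ℝ) ≤ n := by exact_mod_cast hn
  have h_gap : ((n : ℝ) ^ 2 - 8 * n - 1) * ξ c ≤ 0 :=
    mul_nonpos_of_nonneg_of_nonpos (by nlinarith) hξc.le
  linarith

theorem stmt_19_general (ε : ℝ) (ξ : ℝ → ℝ)
    (hneg : ∀ x ∈ Set.Ioo 0 ε, ξ x < 0)
    (hmono : StrictMonoOn ξ (Set.Ioo 0 ε))
    (hbot : Filter.Tendsto ξ (nhdsWithin 0 (Set.Ioi 0)) Filter.atBot)
    (c : ℕ → ℝ)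
    (hcpos : ∀ n, 0 < c n) (hclt : ∀ n, c n < ε)
    (hc0 : Filter.Tendsto c Filter.atTop (nhds 0))
    (hratio : ∀ n : ℕ, 2 ≤ n → ((n : ℝ)) ^ 2 < ξ ((1 - 1 / n) * c n) / ξ (c n))
    (lam a : ℕ → ℝ) (K : ℕ → ℕ)
    (hlam : ∀ n : ℕ, lam n = 1 - 1 / n)
    (ha : ∀ n : ℕ, a n = c n / lam n)
    (hK : ∀ n : ℕ,
      K n = 2 * Nat.floor (-ξ (c n) / (lam n * a n * Real.sqrt (1 - lam n ^ 2)))) :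
    Filter.Tendsto K Filter.atTop Filter.atTop ∧
    Filter.Tendsto
      (fun n => (K n : ℝ) * lam n * a n * Real.sqrt (1 - lam n ^ 2) + ξ (lam n * a n))
      Filter.atTop Filter.atTop ∧
    ∀ r ∈ Set.Ioo (0:ℝ) 1,
      Filter.Tendsto (fun n => 2 * (K n : ℝ) * a n + ξ (r * a n))
        Filter.atTop Filter.atBot := by
  have hξc : Tendsto (fun n => ξ (c n)) atTop atBot :=
    hbot.comp (tendsto_nhdsWithin_iff.2 ⟨hc0, .of_forall hcpos⟩)
  have hX : Tendsto (fun n => -ξ (c n)) atTop atTop := tendsto_neg_atBot_atTop.comp hξc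
  have hD : Tendsto (fun n => lam n * a n * √(1 - lam n ^ 2)) atTop (𝓝[>] 0) := by
    simpa only [ha, hlam] using tendsto_mul_div_mul_sqrt_nhdsGT_zero hcpos hc0
  obtain rfl : K = fun n => 2 * ⌊-ξ (c n) / (lam n * a n * √(1 - lam n ^ 2))⌋₊ := funext hK
  refine ⟨tendsto_two_mul_natFloor_div_atTop hX hD, ?_, fun r ⟨hr0, hr1⟩ => ?_⟩
  · refine (tendsto_two_mul_natFloor_div_mul_sub_atTop hX hD).congr' ?_
    filter_upwards [eventually_ge_atTop 2] with n hn
    rw [mul_assoc _ (lam n), ha n, hlam n, mul_div_cancel₀ _ (one_sub_inv_pos hn).ne']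
    ring
  · have hr_lt : ∀ᶠ n in atTop, r < lam n ^ 2 := by
      have : Tendsto (fun n => lam n ^ 2) atTop (𝓝 1) := by
        simpa [hlam] using tendsto_one_sub_inv_natCast.pow 2
      exact this.eventually (eventually_gt_nhds hr1)
    refine tendsto_atBot_mono' _ ?_ hξc
    filter_upwards [hr_lt, eventually_ge_atTop 9] with n hrn hn
    exact two_mul_natFloor_mul_add_le hmono hn (hlam n) (ha n) (hcpos n) (hclt n)
      (hneg _ ⟨hcpos n, hclt n⟩) (hlam n ▸ hratio n (by omega)) hr0 hrn

theorem stmt_19 (ε : ℝ) (hε : 0 < ε) (ξ : ℝ → ℝ)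
    (hneg : ∀ x ∈ Set.Ioo 0 ε, ξ x < 0)
    (hmono : StrictMonoOn ξ (Set.Ioo 0 ε))
    (hcont : ContinuousOn ξ (Set.Ioo 0 ε))
    (hbot : Filter.Tendsto ξ (nhdsWithin 0 (Set.Ioi 0)) Filter.atBot)
    (c : ℕ → ℝ)
    (hcpos : ∀ n, 0 < c n) (hclt : ∀ n, c n < ε)
    (hcanti : Antitone c)
    (hc0 : Filter.Tendsto c Filter.atTop (nhds 0))
    (hratio : ∀ n : ℕ, 2 ≤ n → ((n : ℝ)) ^ 2 < ξ ((1 - 1 / n) * c n) / ξ (c n))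
    (lam a : ℕ → ℝ) (K : ℕ → ℕ)
    (hlam : ∀ n : ℕ, lam n = 1 - 1 / n)
    (ha : ∀ n : ℕ, a n = c n / lam n)
    (hK : ∀ n : ℕ,
      K n = 2 * Nat.floor (-ξ (c n) / (lam n * a n * Real.sqrt (1 - lam n ^ 2)))) :
    Filter.Tendsto K Filter.atTop Filter.atTop ∧
    Filter.Tendsto
      (fun n => (K n : ℝ) * lam n * a n * Real.sqrt (1 - lam n ^ 2) + ξ (lam n * a n))
      Filter.atTop Filter.atTop ∧
    ∀ r ∈ Set.Ioo (0:ℝ) 1,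
      Filter.Tendsto (fun n => 2 * (K n : ℝ) * a n + ξ (r * a n))
        Filter.atTop Filter.atBot :=
  stmt_19_general ε ξ hneg hmono hbot c hcpos hclt hc0 hratio lam a K hlam ha hK
end
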